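/- arXiv:2601.15993 — 2 statements merged into one kernel-verified Lean document; each statement's English description precedes it below -/
import Mathlib

section
/- Let R > 0, δ > 0, K > 0 and let β ∈ ℝ² be nonzero with 2K ≤ R·‖β‖. Let S be a finite set of vectors u ∈ ℝ² such that: (i) R ≤ ‖u‖ ≤ 2R for all u ∈ S; (ii) the inner product u⋅β ≥ 0 for all u ∈ S; (iii) |u × β| ≤ K for all u ∈ S; and (iv) |u × v| ≥ δ for all distinct u, v ∈ S. Then the cardinality of S is at most 8πKR/(δ‖β‖) + 1. -/
/-!
Measure directions by the tangent `tanAngle u β = (u × β) / (u ⋅ β)` of the angle to `β`.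
Since `|u × β| ≤ K ≤ R‖β‖/2 ≤ ‖u‖‖β‖/2`, every `u ∈ S` has `u ⋅ β ∈ [R‖β‖/2, 2R‖β‖]`, so these
tangents lie in an interval of radius `2K/(R‖β‖)`. The identity
`tanAngle u β - tanAngle v β = (u × v)‖β‖² / ((u ⋅ β)(v ⋅ β))` makes them `δ/(4R²)`-separated,
so there are at most `16KR/(δ‖β‖) + 1 ≤ 8πKR/(δ‖β‖) + 1` of them.
-/

noncomputable def cross (u v : ℝ × ℝ) : ℝ := u.1 * v.2 - u.2 * v.1

noncomputable def enorm2 (u : ℝ × ℝ) : ℝ := Real.sqrt (u.1 ^ 2 + u.2 ^ 2)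

theorem Nat.floor_lt_floor_of_add_one_le {R : Type*} [Semiring R] [LinearOrder R]
    [IsStrictOrderedRing R] [FloorSemiring R] {a b : R} (ha : 0 ≤ a) (hab : a + 1 ≤ b) :
    ⌊a⌋₊ < ⌊b⌋₊ := by
  rw [Nat.lt_iff_add_one_le, ← Nat.floor_add_one ha]
  exact Nat.floor_le_floor hab

/-- Points `f x ∈ [-A, A]` at mutual distance at least `ε` fall into distinct cells
`⌊(f x + A) / ε⌋₊ ≤ ⌊2A / ε⌋₊`. -/
theorem Finset.card_le_of_abs_le_of_separated {α : Type*} (S : Finset α) (f : α → ℝ)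
    {A ε : ℝ} (hA : 0 ≤ A) (hε : 0 < ε) (hbound : ∀ x ∈ S, |f x| ≤ A)
    (hsep : ∀ x ∈ S, ∀ y ∈ S, x ≠ y → ε ≤ |f x - f y|) :
    (S.card : ℝ) ≤ 2 * A / ε + 1 := by
  set cell : α → ℕ := fun x => ⌊(f x + A) / ε⌋₊
  have cell_nonneg : ∀ x ∈ S, 0 ≤ (f x + A) / ε := fun x hx =>
    div_nonneg (by linarith [neg_abs_le (f x), hbound x hx]) hε.le
  have cell_lt : ∀ x ∈ S, ∀ y ∈ S, f x + ε ≤ f y → cell x < cell y := by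
    intro x hx y _ hxy
    refine Nat.floor_lt_floor_of_add_one_le (cell_nonneg x hx) ?_
    rw [div_add_one hε.ne', div_le_div_iff_of_pos_right hε]
    linarith
  have maps : ∀ x ∈ S, cell x ∈ Finset.range (⌊2 * A / ε⌋₊ + 1) := by
    intro x hx
    refine Finset.mem_range_succ_iff.mpr (Nat.floor_le_floor ?_)
    rw [div_le_div_iff_of_pos_right hε]
    linarith [le_abs_self (f x), hbound x hx]
  have inj : Set.InjOn cell S := by
    intro x hx y hy hcell
    by_contra hxy
    rcases le_abs'.mp (hsep x hx y hy hxy) with h | h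
    · exact (cell_lt x hx y hy (by linarith)).ne hcell
    · exact (cell_lt y hy x hx (by linarith)).ne hcell.symm
  calc (S.card : ℝ) ≤ (⌊2 * A / ε⌋₊ + 1 : ℕ) := by
        exact_mod_cast (Finset.card_le_card_of_injOn cell maps inj).trans_eq
          (Finset.card_range _)
    _ ≤ 2 * A / ε + 1 := by
        push_cast
        linarith [Nat.floor_le (div_nonneg (mul_nonneg zero_le_two hA) hε.le)]

noncomputable def dot (u v : ℝ × ℝ) : ℝ := u.1 * v.1 + u.2 * v.2

/-- The signed tangent of the angle between `u` and `v`; junk value `0` when `u ⊥ v`. -/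
noncomputable def tanAngle (u v : ℝ × ℝ) : ℝ := cross u v / dot u v

theorem enorm2_nonneg (u : ℝ × ℝ) : 0 ≤ enorm2 u := Real.sqrt_nonneg _

theorem enorm2_sq (u : ℝ × ℝ) : enorm2 u ^ 2 = u.1 ^ 2 + u.2 ^ 2 :=
  Real.sq_sqrt (by positivity)

theorem enorm2_pos {u : ℝ × ℝ} (hu : u ≠ 0) : 0 < enorm2 u := by
  refine Real.sqrt_pos.mpr ?_
  rw [Ne, Prod.ext_iff, Prod.fst_zero, Prod.snd_zero, not_and_or] at hu
  rcases hu with h | h <;> positivity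

theorem cross_sq_add_dot_sq (u v : ℝ × ℝ) :
    cross u v ^ 2 + dot u v ^ 2 = (enorm2 u * enorm2 v) ^ 2 := by
  rw [mul_pow, enorm2_sq, enorm2_sq, cross, dot]
  ring

theorem dot_le_enorm2_mul (u v : ℝ × ℝ) : dot u v ≤ enorm2 u * enorm2 v :=
  le_of_sq_le_sq (by nlinarith [cross_sq_add_dot_sq u v, sq_nonneg (cross u v)])
    (mul_nonneg (enorm2_nonneg u) (enorm2_nonneg v))

theorem enorm2_mul_div_two_le_dot {u v : ℝ × ℝ} (hdot : 0 ≤ dot u v)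
    (hcross : 2 * |cross u v| ≤ enorm2 u * enorm2 v) :
    enorm2 u * enorm2 v / 2 ≤ dot u v := by
  have hsq : (2 * cross u v) ^ 2 ≤ (enorm2 u * enorm2 v) ^ 2 := by
    rw [← sq_abs, abs_mul, abs_two]
    exact pow_le_pow_left₀ (by positivity) hcross 2
  exact le_of_sq_le_sq (by nlinarith [cross_sq_add_dot_sq u v]) hdot

theorem tanAngle_sub_tanAngle {u v w : ℝ × ℝ} (hu : dot u w ≠ 0) (hv : dot v w ≠ 0) :
    tanAngle u w - tanAngle v w = cross u v * enorm2 w ^ 2 / (dot u w * dot v w) := by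
  rw [tanAngle, tanAngle, div_sub_div _ _ hu hv, enorm2_sq, cross, cross, cross, dot, dot]
  ring

theorem abs_tanAngle_le {u w : ℝ × ℝ} {K m : ℝ} (hcross : |cross u w| ≤ K) (hm : 0 < m)
    (hdot : m ≤ dot u w) : |tanAngle u w| ≤ K / m := by
  rw [tanAngle, abs_div, abs_of_pos (hm.trans_le hdot)]
  exact div_le_div₀ ((abs_nonneg _).trans hcross) hcross hm hdot

theorem le_abs_tanAngle_sub_tanAngle {u v w : ℝ × ℝ} {δ M : ℝ} (hcross : δ ≤ |cross u v|)
    (hu : 0 < dot u w) (hv : 0 < dot v w) (huM : dot u w ≤ M) (hvM : dot v w ≤ M) :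
    δ * enorm2 w ^ 2 / M ^ 2 ≤ |tanAngle u w - tanAngle v w| := by
  rw [tanAngle_sub_tanAngle hu.ne' hv.ne', abs_div, abs_mul, abs_of_pos (mul_pos hu hv),
    abs_of_nonneg (sq_nonneg (enorm2 w)), sq M]
  exact div_le_div₀ (by positivity) (by gcongr) (mul_pos hu hv)
    (mul_le_mul huM hvM hv.le (hu.le.trans huM))

theorem isolated_sector_count (R δ K : ℝ) (hR : 0 < R) (hδ : 0 < δ) (hK : 0 < K)
    (β : ℝ × ℝ) (hβ : β ≠ 0) (hKR : 2 * K ≤ R * enorm2 β)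
    (S : Finset (ℝ × ℝ))
    (hnorm : ∀ u ∈ S, R ≤ enorm2 u ∧ enorm2 u ≤ 2 * R)
    (hinner : ∀ u ∈ S, 0 ≤ u.1 * β.1 + u.2 * β.2)
    (hcrossβ : ∀ u ∈ S, |cross u β| ≤ K)
    (hsep : ∀ u ∈ S, ∀ v ∈ S, u ≠ v → δ ≤ |cross u v|) :
    (S.card : ℝ) ≤ 8 * Real.pi * K * R / (δ * enorm2 β) + 1 := by
  have hβpos := enorm2_pos hβ
  have hdot_ge : ∀ u ∈ S, R * enorm2 β / 2 ≤ dot u β := fun u hu => by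
    have hRu : R * enorm2 β ≤ enorm2 u * enorm2 β := by gcongr; exact (hnorm u hu).1
    exact (by linarith : R * enorm2 β / 2 ≤ enorm2 u * enorm2 β / 2).trans
      (enorm2_mul_div_two_le_dot (hinner u hu) (by linarith [hcrossβ u hu]))
  have hdot_le : ∀ u ∈ S, dot u β ≤ 2 * R * enorm2 β := fun u hu =>
    (dot_le_enorm2_mul u β).trans (by gcongr; exact (hnorm u hu).2)
  have hdot_pos : ∀ u ∈ S, 0 < dot u β := fun u hu =>
    lt_of_lt_of_le (by positivity) (hdot_ge u hu)
  have hcount := S.card_le_of_abs_le_of_separated (tanAngle · β) (by positivity)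
    (by positivity : 0 < δ * enorm2 β ^ 2 / (2 * R * enorm2 β) ^ 2)
    (fun u hu => abs_tanAngle_le (hcrossβ u hu) (by positivity) (hdot_ge u hu))
    (fun u hu v hv huv => le_abs_tanAngle_sub_tanAngle (hsep u hu v hv huv)
      (hdot_pos u hu) (hdot_pos v hv) (hdot_le u hu) (hdot_le v hv))
  refine hcount.trans ?_
  gcongr ?_ + 1
  calc 2 * (K / (R * enorm2 β / 2)) / (δ * enorm2 β ^ 2 / (2 * R * enorm2 β) ^ 2)
      = 16 * K * R / (δ * enorm2 β) := by field_simp; ring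
    _ ≤ 8 * Real.pi * K * R / (δ * enorm2 β) := by
      gcongr
      linarith [Real.pi_gt_three]
end

section
/- Let D ≥ 3 be a real number, a > 0, and let I ⊂ ℝ be an interval of length M. Let I₁, …, I_n ⊂ ℝ be intervals with |I_k| ≥ a for each k and ∑_{k=1}^n |I_k| ≤ M/(4D). For each k let Ĩ_k be the interval with the same center as I_k and length D·|I_k|, and set I₀ = I \ ⋃_k Ĩ_k. Then: (1) the Lebesgue measure of I₀ is at least (3/4)·M; and (2) for every x ∈ I₀, the closed interval centered at x of length (D−2)·a is disjoint from every I_k. -/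
/-! The dilated intervals have total length `D * ∑ |I_k| ≤ M / 4`, which gives (1). A point
outside `Ĩ_k` lies at distance more than `D |I_k| / 2 ≥ (D - 2) a / 2 + |I_k| / 2` from the centre
of `I_k`, because `|I_k| ≥ a`; this gives (2). -/

open MeasureTheory Metric Set

theorem measureReal_sub_sum_le_measureReal_sdiff_iUnion {α ι : Type*} [MeasurableSpace α]
    [Fintype ι] {μ : Measure α} (s : Set α) {t : ι → Set α} (ht : ∀ k, μ (t k) ≠ ⊤) :
    μ.real s - ∑ k, μ.real (t k) ≤ μ.real (s \ ⋃ k, t k) :=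
  (sub_le_sub_left (measureReal_iUnion_fintype_le t) _).trans
    (le_measureReal_sdiff (measure_iUnion_fintype_le μ t |>.trans_lt
      (ENNReal.sum_lt_top.mpr fun k _ => (ht k).lt_top)).ne)

theorem sub_two_mul_sum_le_volume_real_Icc_sdiff_iUnion_Icc {ι : Type*} [Fintype ι]
    (x M : ℝ) (c r : ι → ℝ) (hr : ∀ k, 0 ≤ r k) :
    M - 2 * ∑ k, r k ≤ volume.real (Icc x (x + M) \ ⋃ k, Icc (c k - r k) (c k + r k)) := by
  have volume_real_Icc_centered (k : ι) :
      volume.real (Icc (c k - r k) (c k + r k)) = 2 * r k := by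
    rw [Real.volume_real_Icc_of_le (by linarith [hr k])]
    ring
  refine le_trans ?_
    (measureReal_sub_sum_le_measureReal_sdiff_iUnion _ fun _ => measure_Icc_lt_top.ne)
  rw [Finset.sum_congr rfl fun k _ => volume_real_Icc_centered k, ← Finset.mul_sum,
    Real.volume_real_Icc, add_sub_cancel_left]
  gcongr
  exact le_max_left _ _

theorem Metric.closedBall_disjoint_closedBall_of_notMem {α : Type*} [PseudoMetricSpace α]
    {x y : α} {R r ρ : ℝ} (hx : x ∉ closedBall y ρ) (h : R + r ≤ ρ) :
    Disjoint (closedBall x R) (closedBall y r) :=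
  closedBall_disjoint_closedBall (h.trans_lt (not_le.mp hx))

theorem dilation_covering_lemma (D a M x : ℝ) (hD : 3 ≤ D) (ha : 0 < a)
    (n : ℕ) (c L : Fin n → ℝ)
    (hL : ∀ k, a ≤ L k)
    (hsum : ∑ k, L k ≤ M / (4 * D)) :
    (3 / 4 * M : ℝ) ≤ (volume
        (Set.Icc x (x + M) \ ⋃ k, Set.Icc (c k - D * L k / 2) (c k + D * L k / 2))).toReal ∧
    ∀ y ∈ Set.Icc x (x + M) \ ⋃ k, Set.Icc (c k - D * L k / 2) (c k + D * L k / 2),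
      ∀ k, Disjoint (Set.Icc (y - (D - 2) * a / 2) (y + (D - 2) * a / 2))
        (Set.Icc (c k - L k / 2) (c k + L k / 2)) := by
  have hL₀ (k : Fin n) : 0 ≤ L k := ha.le.trans (hL k)
  have hDsum : D * ∑ k, L k ≤ M / 4 := by
    rw [le_div_iff₀ (by linarith)] at hsum
    linarith
  constructor
  · calc 3 / 4 * M ≤ M - 2 * ∑ k, D * L k / 2 := by
          rw [← Finset.sum_div, ← Finset.mul_sum]
          linarith
      _ ≤ _ := sub_two_mul_sum_le_volume_real_Icc_sdiff_iUnion_Icc x M c _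
          fun k => by have := hL₀ k; positivity
  · rintro y ⟨-, hy⟩ k
    simp only [← Real.closedBall_eq_Icc] at hy ⊢
    refine closedBall_disjoint_closedBall_of_notMem (fun h => hy (mem_iUnion_of_mem k h)) ?_
    have : (D - 2) * a ≤ (D - 2) * L k := mul_le_mul_of_nonneg_left (hL k) (by linarith)
    linarith [hL₀ k]
end
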